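/- arXiv:0807.1338 — 2 statements merged into one kernel-verified Lean document; each statement's English description precedes it below -/
import Mathlib

section
/- Let ρ_{AA'BB'} = ρ_AB ⊗ ρ_{A'B'} be a tensor product of two bipartite density operators. Then the conditional min-entropy is additive: H_min(AA'|BB')_ρ = H_min(A|B)_{ρ_AB} + H_min(A'|B')_{ρ_{A'B'}}. -/
open Matrix
open scoped Kronecker ComplexConjugate ComplexOrder

noncomputable section

/-- Partial trace over the first (A) subsystem. -/
def ptraceA {A B : Type*} [Fintype A] (M : Matrix (A × B) (A × B) ℂ) :
    Matrix B B ℂ :=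
  Matrix.of fun i j => ∑ a : A, M (a, i) (a, j)

/-- Partial trace over the second (B) subsystem. -/
def ptraceB {A B : Type*} [Fintype B] (M : Matrix (A × B) (A × B) ℂ) :
    Matrix A A ℂ :=
  Matrix.of fun i j => ∑ b : B, M (i, b) (j, b)

/-- A density operator: positive semidefinite with unit trace. -/
def IsDensity {n : Type*} [Fintype n] (ρ : Matrix n n ℂ) : Prop :=
  ρ.PosSemidef ∧ ρ.trace = 1

/-- Conditional min-entropy `H_min(A|B)_ρ = - inf_σ D_∞(ρ ‖ id_A ⊗ σ)`, where the
infimum ranges over density operators `σ` on `B` and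
`D_∞(τ‖τ') = inf {λ | τ ≤ 2^λ τ'}`. -/
def Hmin {A B : Type*} [Fintype A] [Fintype B] [DecidableEq A] [DecidableEq B]
    (ρ : Matrix (A × B) (A × B) ℂ) : ℝ :=
  - sInf {l : ℝ | ∃ σ : Matrix B B ℂ, IsDensity σ ∧
      (((2 : ℝ) ^ l : ℝ) • ((1 : Matrix A A ℂ) ⊗ₖ σ) - ρ).PosSemidef}

open scoped Classical in
/-- Positive semidefinite square root (junk value `0` off the PSD cone). -/
def psqrt {n : Type*} [Fintype n] [DecidableEq n] (M : Matrix n n ℂ) : Matrix n n ℂ :=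
  if h : M.PosSemidef then
    h.1.eigenvectorUnitary.1 * diagonal ((↑) ∘ Real.sqrt ∘ h.1.eigenvalues) *
      (star h.1.eigenvectorUnitary : Matrix n n ℂ) else 0

/-- Trace norm `‖M‖₁ = tr √(Mᴴ M)`. -/
def traceNorm {n : Type*} [Fintype n] [DecidableEq n] (M : Matrix n n ℂ) : ℝ :=
  (psqrt (Mᴴ * M)).trace.re

/-- Fidelity `F(ρ,σ) = ‖√ρ √σ‖₁`. -/
def fidelity {n : Type*} [Fintype n] [DecidableEq n] (ρ σ : Matrix n n ℂ) : ℝ :=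
  traceNorm (psqrt ρ * psqrt σ)

/-- Choi matrix of a linear map on matrices. -/
def choi {B A' : Type*} [Fintype B] [DecidableEq B] [Fintype A']
    (F : Matrix B B ℂ →ₗ[ℂ] Matrix A' A' ℂ) : Matrix (B × A') (B × A') ℂ :=
  Matrix.of fun p q => (F (Matrix.single p.1 q.1 1)) p.2 q.2

/-- A quantum operation (CPTP map): completely positive (PSD Choi matrix, by Choi's
theorem) and trace-preserving. -/
def IsCPTP {B A' : Type*} [Fintype B] [DecidableEq B] [Fintype A']
    (F : Matrix B B ℂ →ₗ[ℂ] Matrix A' A' ℂ) : Prop :=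
  (choi F).PosSemidef ∧ ∀ M : Matrix B B ℂ, (F M).trace = M.trace

/-- The map `id_A ⊗ F` applied to a bipartite operator. -/
def idTensor {A B A' : Type*} [Fintype B]
    (F : Matrix B B ℂ →ₗ[ℂ] Matrix A' A' ℂ) (ρ : Matrix (A × B) (A × B) ℂ) :
    Matrix (A × A') (A × A') ℂ :=
  Matrix.of fun p q => (F (Matrix.of fun b b' => ρ (p.1, b) (q.1, b'))) p.2 q.2

/-- The quadratic form `⟨ψ|M|ψ⟩` (real part). -/
def pureOverlap {n : Type*} [Fintype n] (ψ : n → ℂ) (M : Matrix n n ℂ) : ℝ :=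
  (∑ p, ∑ q, conj (ψ p) * M p q * ψ q).re

/-- The maximally entangled state `|Φ⟩ = d^{-1/2} ∑ₓ |x⟩|x⟩`. -/
def maxEnt (A : Type*) [Fintype A] [DecidableEq A] : A × A → ℂ :=
  fun p => if p.1 = p.2 then ((Real.sqrt (Fintype.card A))⁻¹ : ℝ) else 0

/-- `q_corr(A|B)_ρ`: `d_A` times the maximal squared fidelity with the maximally
entangled state achievable by quantum operations on `B`. -/
def qcorr {A B : Type*} [Fintype A] [Fintype B] [DecidableEq A] [DecidableEq B]
    (ρ : Matrix (A × B) (A × B) ℂ) : ℝ :=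
  (Fintype.card A : ℝ) *
    sSup {x : ℝ | ∃ F : Matrix B B ℂ →ₗ[ℂ] Matrix A A ℂ, IsCPTP F ∧
      x = pureOverlap (maxEnt A) (idTensor F ρ)}

/-- The completely mixed state. -/
def mixed (A : Type*) [Fintype A] [DecidableEq A] : Matrix A A ℂ :=
  ((Fintype.card A : ℂ)⁻¹) • (1 : Matrix A A ℂ)

/-- `q_decpl(A|B)_ρ`: `d_A` times the maximal squared fidelity with `τ_A ⊗ σ_B`. -/
def qdecpl {A B : Type*} [Fintype A] [Fintype B] [DecidableEq A] [DecidableEq B]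
    (ρ : Matrix (A × B) (A × B) ℂ) : ℝ :=
  (Fintype.card A : ℝ) *
    sSup {x : ℝ | ∃ σ : Matrix B B ℂ, IsDensity σ ∧
      x = (fidelity ρ ((mixed A) ⊗ₖ σ)) ^ 2}

/-- Reduced state `tr_C |ψ⟩⟨ψ|` of a pure state `ψ` on `(A ⊗ B) ⊗ C`. -/
def redL {S C : Type*} [Fintype C] (ψ : S × C → ℂ) : Matrix S S ℂ :=
  Matrix.of fun s s' => ∑ c, ψ (s, c) * conj (ψ (s', c))

/-- Reduced state `tr_B |ψ⟩⟨ψ|` on `A ⊗ C` of a pure state `ψ` on `(A ⊗ B) ⊗ C`. -/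
def redAC {A B C : Type*} [Fintype B] (ψ : (A × B) × C → ℂ) :
    Matrix (A × C) (A × C) ℂ :=
  Matrix.of fun p q => ∑ b, ψ ((p.1, b), p.2) * conj (ψ ((q.1, b), q.2))


/-- The tensor product `ρ_AB ⊗ ρ_{A'B'}`, arranged on `(A ⊗ A') ⊗ (B ⊗ B')`. -/
def prodState {A A' B B' : Type*}
    (ρ1 : Matrix (A × B) (A × B) ℂ) (ρ2 : Matrix (A' × B') (A' × B') ℂ) :
    Matrix ((A × A') × (B × B')) ((A × A') × (B × B')) ℂ :=
  Matrix.of fun p q =>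
    ρ1 (p.1.1, p.2.1) (q.1.1, q.2.1) * ρ2 (p.1.2, p.2.2) (q.1.2, q.2.2)

/-!
Call `λ` feasible for `ρ_AB` when `ρ_AB ≤ 2^λ (1_A ⊗ σ_B)` for some state `σ_B`, so that
`H_min = -inf λ`. Tensoring feasible witnesses shows that `λ + λ'` is feasible for `ρ ⊗ ρ'`.
Conversely, let `σ_{BB'}` witness `λ` for `ρ ⊗ ρ'` and let `μ` be infeasible for `ρ'`. The
marginal `σ_{B'}` then fails at level `μ`, so some vector `φ` on `A'B'` has
`⟨φ|ρ'|φ⟩ > 2^μ ⟨φ|1 ⊗ σ_{B'}|φ⟩`. Compressing the operator inequality with `φ` on the `A'B'`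
factor gives `⟨φ|ρ'|φ⟩ ρ ≤ 2^λ (1 ⊗ τ)` with `tr τ = ⟨φ|1 ⊗ σ_{B'}|φ⟩`, and normalising `τ`
shows that `λ - μ` is feasible for `ρ`. No semidefinite duality is needed.
-/

open scoped MatrixOrder

namespace Matrix

variable {𝕜 m n : Type*} [RCLike 𝕜] [Fintype n]

theorem trace_le_trace {M N : Matrix n n 𝕜} (h : M ≤ N) : M.trace ≤ N.trace := by
  simpa [trace_sub] using (le_iff.1 h).trace_nonneg

theorem exists_re_dotProduct_lt_of_not_le {M N : Matrix n n 𝕜} (hM : M.IsHermitian)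
    (hN : N.IsHermitian) (h : ¬ M ≤ N) :
    ∃ x : n → 𝕜, RCLike.re (star x ⬝ᵥ N *ᵥ x) < RCLike.re (star x ⬝ᵥ M *ᵥ x) := by
  by_contra! hx
  refine h (PosSemidef.of_dotProduct_mulVec_nonneg (hN.sub hM) fun x => ?_)
  refine RCLike.nonneg_iff.2 ⟨?_, (hN.sub hM).im_star_dotProduct_mulVec_self x⟩
  simpa [sub_mulVec, dotProduct_sub] using hx x

theorem conjTranspose_mul_mul_le_conjTranspose_mul_mul [Fintype m] {M N : Matrix n n 𝕜}
    (h : M ≤ N) (E : Matrix n m 𝕜) : Eᴴ * M * E ≤ Eᴴ * N * E := by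
  rw [le_iff, ← Matrix.sub_mul, ← Matrix.mul_sub]
  exact (le_iff.1 h).conjTranspose_mul_mul_same E

theorem le_smul_of_smul_le_smul {X K : Matrix n n 𝕜} (hK : 0 ≤ K) {a b c : ℝ} (hc : 0 < c)
    (h : c • X ≤ a • K) (hab : a ≤ c * b) : X ≤ b • K := by
  rw [← smul_le_smul_iff_of_pos_left hc, smul_smul]
  exact h.trans (smul_le_smul_of_nonneg_right hab hK)

omit [Fintype n] in
theorem PosSemidef.of_one_kronecker [DecidableEq m] [Nonempty m] {M : Matrix n n 𝕜}
    (h : ((1 : Matrix m m 𝕜) ⊗ₖ M).PosSemidef) : M.PosSemidef := by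
  convert h.submatrix (Classical.arbitrary m, ·)
  ext; simp

open scoped Matrix.Norms.L2Operator in
theorem exists_le_smul_one [DecidableEq n] {M : Matrix n n ℂ} (hM : M.IsHermitian) :
    ∃ r : ℝ, 0 < r ∧ M ≤ r • 1 := by
  refine ⟨‖M‖ + 1, by positivity, ?_⟩
  calc M ≤ algebraMap ℝ _ ‖M‖ := IsSelfAdjoint.le_algebraMap_norm_self hM
    _ ≤ (‖M‖ + 1) • 1 := by
      rw [Algebra.algebraMap_eq_smul_one]
      exact smul_le_smul_of_nonneg_right (by linarith) PosSemidef.one.nonneg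

end Matrix

theorem IsDensity.nonempty {n : Type*} [Fintype n] {ρ : Matrix n n ℂ} (hρ : IsDensity ρ) :
    Nonempty n := by
  by_contra h
  rw [not_nonempty_iff] at h
  simpa [Matrix.trace] using hρ.2

theorem IsDensity.kronecker {m n : Type*} [Fintype m] [Fintype n] {σ : Matrix m m ℂ}
    {σ' : Matrix n n ℂ} (hσ : IsDensity σ) (hσ' : IsDensity σ') : IsDensity (σ ⊗ₖ σ') :=
  ⟨hσ.1.kronecker hσ'.1, by rw [Matrix.trace_kronecker, hσ.2, hσ'.2, mul_one]⟩

theorem IsDensity.ptraceA {B B' : Type*} [Fintype B] [Fintype B']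
    {σ : Matrix (B × B') (B × B') ℂ} (hσ : IsDensity σ) : IsDensity (ptraceA σ) := by
  refine ⟨?_, ?_⟩
  · have h : _root_.ptraceA σ = ∑ b : B, σ.submatrix (b, ·) (b, ·) := by
      ext; simp [_root_.ptraceA, Matrix.sum_apply]
    exact h ▸ Matrix.posSemidef_sum _ fun b _ => hσ.1.submatrix _
  · rw [← hσ.2]
    simp only [Matrix.trace, Matrix.diag_apply, _root_.ptraceA, Matrix.of_apply,
      Fintype.sum_prod_type]
    exact Finset.sum_comm

theorem isDensity_inv_card_smul_one {n : Type*} [Fintype n] [DecidableEq n] [Nonempty n] :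
    IsDensity ((Fintype.card n : ℝ)⁻¹ • (1 : Matrix n n ℂ)) := by
  refine ⟨Matrix.PosSemidef.one.smul (by positivity), ?_⟩
  rw [Matrix.trace_smul, Matrix.trace_one]
  simp

def feasibleLevels {A B : Type*} [Fintype A] [Fintype B] [DecidableEq A] [DecidableEq B]
    (ρ : Matrix (A × B) (A × B) ℂ) : Set ℝ :=
  {l | ∃ σ : Matrix B B ℂ, IsDensity σ ∧ ρ ≤ (2 : ℝ) ^ l • ((1 : Matrix A A ℂ) ⊗ₖ σ)}

section feasibleLevels

variable {A B : Type*} [Fintype A] [Fintype B] [DecidableEq A] [DecidableEq B]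
  {ρ : Matrix (A × B) (A × B) ℂ}

theorem Hmin_eq_neg_sInf_feasibleLevels : Hmin ρ = - sInf (feasibleLevels ρ) := rfl

theorem feasibleLevels_nonempty (hρ : IsDensity ρ) : (feasibleLevels ρ).Nonempty := by
  have : Nonempty B := hρ.nonempty.map Prod.snd
  obtain ⟨r, hr, hρr⟩ := Matrix.exists_le_smul_one hρ.1.1
  have hB : (0 : ℝ) < Fintype.card B := by exact_mod_cast Fintype.card_pos
  refine ⟨Real.logb 2 (r * Fintype.card B), _, isDensity_inv_card_smul_one, ?_⟩
  rwa [Real.rpow_logb two_pos (by norm_num) (by positivity), Matrix.kronecker_smul,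
    Matrix.one_kronecker_one, smul_smul, mul_assoc, mul_inv_cancel₀ hB.ne', mul_one]

theorem feasibleLevels_bddBelow (hρ : IsDensity ρ) : BddBelow (feasibleLevels ρ) := by
  have : Nonempty A := hρ.nonempty.map Prod.fst
  refine ⟨-Real.logb 2 (Fintype.card A), fun l ⟨σ, hσ, hle⟩ => ?_⟩
  have htr := Matrix.trace_le_trace hle
  rw [Matrix.trace_smul, Matrix.trace_kronecker, Matrix.trace_one, hσ.2, hρ.2] at htr
  have h : (1 : ℝ) ≤ 2 ^ l * Fintype.card A := by
    rw [← Complex.real_le_real]; simpa [Complex.real_smul] using htr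
  rw [neg_le, Real.le_logb_iff_rpow_le one_lt_two (by positivity), Real.rpow_neg zero_le_two,
    inv_le_iff_one_le_mul₀' (by positivity)]
  exact h

theorem sub_mem_feasibleLevels_of_smul_le (hρ : ρ.trace = 1) {τ : Matrix B B ℂ}
    (hτ : τ.PosSemidef) {c l μ : ℝ} (hle : c • ρ ≤ (2 : ℝ) ^ l • ((1 : Matrix A A ℂ) ⊗ₖ τ))
    (hc : 2 ^ μ * τ.trace.re < c) : l - μ ∈ feasibleLevels ρ := by
  set t := τ.trace.re
  have ht : τ.trace = t := Complex.eq_re_of_ofReal_le (r := 0) (by exact_mod_cast hτ.trace_nonneg)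
  have ht0 : 0 ≤ t := Complex.zero_le_real.1 (ht ▸ hτ.trace_nonneg)
  have hcpos : 0 < c := lt_of_le_of_lt (by positivity) hc
  have htpos : 0 < t := by
    have htr := Matrix.trace_le_trace hle
    rw [Matrix.trace_smul, Matrix.trace_smul, Matrix.trace_kronecker, Matrix.trace_one, ht,
      hρ] at htr
    have h : c ≤ 2 ^ l * (Fintype.card A * t) := by
      rw [← Complex.real_le_real]; simpa [Complex.real_smul] using htr
    refine ht0.lt_of_ne fun h0 => ?_
    rw [← h0, mul_zero, mul_zero] at h
    linarith
  refine ⟨t⁻¹ • τ, ⟨hτ.smul (inv_nonneg.2 ht0), ?_⟩, ?_⟩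
  · rw [Matrix.trace_smul, ht, Complex.real_smul]
    push_cast
    field_simp
  · rw [Matrix.kronecker_smul, smul_smul]
    refine Matrix.le_smul_of_smul_le_smul (Matrix.PosSemidef.one.kronecker hτ).nonneg hcpos hle ?_
    rw [Real.rpow_sub two_pos]
    field_simp
    exact hc.le

end feasibleLevels

section prodState

variable {A A' B B' : Type*}

theorem prodState_eq_submatrix_kronecker (P : Matrix (A × B) (A × B) ℂ)
    (Q : Matrix (A' × B') (A' × B') ℂ) :
    prodState P Q = (P ⊗ₖ Q).submatrix (Equiv.prodProdProdComm A A' B B')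
      (Equiv.prodProdProdComm A A' B B') := rfl

theorem prodState_sub_prodState (P R : Matrix (A × B) (A × B) ℂ)
    (Q S : Matrix (A' × B') (A' × B') ℂ) :
    prodState P Q - prodState R S = prodState (P - R) Q + prodState R (Q - S) := by
  ext; simp only [prodState, Matrix.sub_apply, Matrix.add_apply, Matrix.of_apply]; ring

theorem Matrix.PosSemidef.prodState [Finite A] [Finite A'] [Finite B] [Finite B']
    {P : Matrix (A × B) (A × B) ℂ} {Q : Matrix (A' × B') (A' × B') ℂ}
    (hP : P.PosSemidef) (hQ : Q.PosSemidef) : (_root_.prodState P Q).PosSemidef := by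
  rw [prodState_eq_submatrix_kronecker]
  exact (hP.kronecker hQ).submatrix _

theorem prodState_mono [Fintype A] [Fintype A'] [Fintype B] [Fintype B']
    {P R : Matrix (A × B) (A × B) ℂ} {Q S : Matrix (A' × B') (A' × B') ℂ}
    (hR : 0 ≤ R) (hQ : 0 ≤ Q) (hRP : R ≤ P) (hSQ : S ≤ Q) : prodState R S ≤ prodState P Q := by
  rw [Matrix.le_iff, prodState_sub_prodState]
  exact ((Matrix.le_iff.1 hRP).prodState hQ.posSemidef).add
    (hR.posSemidef.prodState (Matrix.le_iff.1 hSQ))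

theorem prodState_smul_one_kronecker [DecidableEq A] [DecidableEq A'] (a b : ℝ)
    (σ : Matrix B B ℂ) (σ' : Matrix B' B' ℂ) :
    prodState (a • ((1 : Matrix A A ℂ) ⊗ₖ σ)) (b • ((1 : Matrix A' A' ℂ) ⊗ₖ σ')) =
      (a * b) • ((1 : Matrix (A × A') (A × A') ℂ) ⊗ₖ (σ ⊗ₖ σ')) := by
  rw [← Matrix.one_kronecker_one]
  ext
  simp only [prodState, Matrix.smul_apply, Matrix.kroneckerMap_apply, Matrix.of_apply,
    Complex.real_smul]
  push_cast
  ring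

end prodState

theorem add_mem_feasibleLevels {A A' B B' : Type*} [Fintype A] [Fintype A'] [Fintype B]
    [Fintype B'] [DecidableEq A] [DecidableEq A'] [DecidableEq B] [DecidableEq B']
    {ρ1 : Matrix (A × B) (A × B) ℂ} {ρ2 : Matrix (A' × B') (A' × B') ℂ} (hρ1 : ρ1.PosSemidef)
    {l m : ℝ} (hl : l ∈ feasibleLevels ρ1) (hm : m ∈ feasibleLevels ρ2) :
    l + m ∈ feasibleLevels (prodState ρ1 ρ2) := by
  obtain ⟨σ, hσ, hρσ⟩ := hl
  obtain ⟨σ', hσ', hρσ'⟩ := hm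
  refine ⟨σ ⊗ₖ σ', hσ.kronecker hσ', ?_⟩
  calc prodState ρ1 ρ2
      ≤ prodState ((2 : ℝ) ^ l • ((1 : Matrix A A ℂ) ⊗ₖ σ))
          ((2 : ℝ) ^ m • ((1 : Matrix A' A' ℂ) ⊗ₖ σ')) :=
        prodState_mono hρ1.nonneg
          ((Matrix.PosSemidef.one.kronecker hσ'.1).smul (by positivity)).nonneg hρσ hρσ'
    _ = _ := by rw [prodState_smul_one_kronecker, ← Real.rpow_add two_pos]

/-- The matrix of `x ↦ x ⊗ φ`, from `A ⊗ B` into `(A ⊗ A') ⊗ (B ⊗ B')`. -/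
def tensorRight (A B : Type*) {A' B' : Type*} [DecidableEq A] [DecidableEq B]
    (φ : A' × B' → ℂ) : Matrix ((A × A') × (B × B')) (A × B) ℂ :=
  Matrix.of fun p q => if p.1.1 = q.1 ∧ p.2.1 = q.2 then φ (p.1.2, p.2.2) else 0

/-- `⟨φ| 1_{A'} ⊗ σ |φ⟩`, the operator on `B` left after contracting `A' ⊗ B'` against `φ`. -/
def sandwich {A' B B' : Type*} [Fintype A'] [Fintype B'] (φ : A' × B' → ℂ)
    (σ : Matrix (B × B') (B × B') ℂ) : Matrix B B ℂ :=
  Matrix.of fun b c => ∑ a', ∑ b', ∑ c', conj (φ (a', b')) * σ (b, b') (c, c') * φ (a', c')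

section compression

variable {A A' B B' : Type*} [Fintype A] [Fintype A'] [Fintype B] [Fintype B']

theorem trace_sandwich [DecidableEq A'] (φ : A' × B' → ℂ) (σ : Matrix (B × B') (B × B') ℂ) :
    (sandwich φ σ).trace = star φ ⬝ᵥ ((1 : Matrix A' A' ℂ) ⊗ₖ ptraceA σ) *ᵥ φ := by
  simp only [sandwich, ptraceA, Matrix.trace, Matrix.diag_apply, Matrix.of_apply, dotProduct,
    Matrix.mulVec, Matrix.kroneckerMap_apply, Pi.star_apply, Complex.star_def, Matrix.one_apply,
    Fintype.sum_prod_type, ite_mul, zero_mul, one_mul, Finset.sum_ite_irrel,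
    Finset.sum_const_zero, Finset.sum_ite_eq, Finset.mem_univ, if_true, Finset.mul_sum,
    Finset.sum_mul]
  refine Finset.sum_comm.trans (Finset.sum_congr rfl fun _ _ => ?_)
  refine Finset.sum_comm.trans (Finset.sum_congr rfl fun _ _ => ?_)
  exact Finset.sum_comm.trans
    (Finset.sum_congr rfl fun _ _ => Finset.sum_congr rfl fun _ _ => by ring)

variable [DecidableEq A] [DecidableEq B]

theorem tensorRight_conj_prodState (φ : A' × B' → ℂ) (ρ1 : Matrix (A × B) (A × B) ℂ)
    (ρ2 : Matrix (A' × B') (A' × B') ℂ) :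
    (tensorRight A B φ)ᴴ * prodState ρ1 ρ2 * tensorRight A B φ =
      (star φ ⬝ᵥ ρ2 *ᵥ φ) • ρ1 := by
  rw [Matrix.mul_assoc]
  ext ⟨α, β⟩ ⟨γ, δ⟩
  simp only [tensorRight, Matrix.mul_apply, Matrix.conjTranspose_apply, Matrix.of_apply,
    prodState, Matrix.smul_apply, smul_eq_mul, dotProduct, Matrix.mulVec, Pi.star_apply,
    Fintype.sum_prod_type, Complex.star_def, apply_ite (starRingEnd ℂ), map_zero,
    ite_mul, mul_ite, zero_mul, mul_zero, ite_and, Finset.sum_ite_eq', Finset.mem_univ,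
    if_true, Finset.sum_ite_irrel, Finset.sum_const_zero, Finset.sum_mul, Finset.mul_sum]
  simp only [mul_comm, mul_assoc, mul_left_comm]

theorem tensorRight_conj_one_kronecker [DecidableEq A'] (φ : A' × B' → ℂ)
    (σ : Matrix (B × B') (B × B') ℂ) :
    (tensorRight A B φ)ᴴ * ((1 : Matrix (A × A') (A × A') ℂ) ⊗ₖ σ) * tensorRight A B φ =
      (1 : Matrix A A ℂ) ⊗ₖ sandwich φ σ := by
  rw [Matrix.mul_assoc, ← Matrix.one_kronecker_one]
  ext ⟨α, β⟩ ⟨γ, δ⟩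
  simp only [tensorRight, sandwich, Matrix.mul_apply, Matrix.conjTranspose_apply,
    Matrix.of_apply, Matrix.kroneckerMap_apply, Matrix.one_apply, Fintype.sum_prod_type,
    Complex.star_def, apply_ite (starRingEnd ℂ), map_zero,
    ite_mul, mul_ite, zero_mul, mul_zero, ite_and, one_mul, mul_one, Finset.sum_ite_eq,
    Finset.sum_ite_eq', Finset.mem_univ, if_true, Finset.sum_ite_irrel, Finset.sum_const_zero,
    Finset.mul_sum]
  simp only [@eq_comm _ γ α, mul_assoc]

variable [DecidableEq A'] [DecidableEq B'] {ρ1 : Matrix (A × B) (A × B) ℂ}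
  {ρ2 : Matrix (A' × B') (A' × B') ℂ}

theorem sub_mem_feasibleLevels (hρ1 : IsDensity ρ1) (hρ2 : IsDensity ρ2) {l μ : ℝ}
    (hl : l ∈ feasibleLevels (prodState ρ1 ρ2)) (hμ : μ ∉ feasibleLevels ρ2) :
    l - μ ∈ feasibleLevels ρ1 := by
  have : Nonempty A := hρ1.nonempty.map Prod.fst
  obtain ⟨σ, hσ, hle⟩ := hl
  have hσ2 : ((1 : Matrix A' A' ℂ) ⊗ₖ ptraceA σ).PosSemidef :=
    Matrix.PosSemidef.one.kronecker hσ.ptraceA.1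
  obtain ⟨φ, hφ⟩ := Matrix.exists_re_dotProduct_lt_of_not_le hρ2.1.1
    (hσ2.smul (by positivity : (0 : ℝ) ≤ 2 ^ μ)).1 fun h => hμ ⟨_, hσ.ptraceA, h⟩
  have hc : star φ ⬝ᵥ ρ2 *ᵥ φ = (star φ ⬝ᵥ ρ2 *ᵥ φ).re :=
    Complex.eq_re_of_ofReal_le (r := 0) (by exact_mod_cast hρ2.1.dotProduct_mulVec_nonneg φ)
  have hcomp := Matrix.conjTranspose_mul_mul_le_conjTranspose_mul_mul hle (tensorRight A B φ)
  rw [tensorRight_conj_prodState, Matrix.mul_smul, Matrix.smul_mul,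
    tensorRight_conj_one_kronecker, hc, Complex.coe_smul] at hcomp
  have hτ := (Matrix.PosSemidef.one.kronecker hσ.1).conjTranspose_mul_mul_same (tensorRight A B φ)
  rw [tensorRight_conj_one_kronecker] at hτ
  refine sub_mem_feasibleLevels_of_smul_le hρ1.2 hτ.of_one_kronecker hcomp ?_
  simpa [Matrix.smul_mulVec, trace_sandwich] using hφ

end compression

open scoped Pointwise in
theorem csInf_eq_csInf_add_csInf {S T U : Set ℝ} (hS : S.Nonempty) (hS' : BddBelow S)
    (hT : T.Nonempty) (hT' : BddBelow T) (hadd : S + T ⊆ U)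
    (hsub : ∀ u ∈ U, ∀ μ ∉ T, u - μ ∈ S) : sInf U = sInf S + sInf T := by
  have hlower : ∀ u ∈ U, sInf S + sInf T ≤ u := fun u hu => by
    suffices sInf T ≤ u - sInf S by linarith
    refine le_of_forall_lt_imp_le_of_dense fun μ hμ => ?_
    have := csInf_le hS' (hsub u hu μ (notMem_of_lt_csInf hμ hT'))
    linarith
  refine le_antisymm ?_ (le_csInf ((hS.add hT).mono hadd) hlower)
  rw [← csInf_add hS hS' hT hT']
  exact csInf_le_csInf ⟨_, hlower⟩ (hS.add hT) hadd

/-- additivity of the conditional min-entropy: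
`H_min(AA'|BB')_{ρ ⊗ ρ'} = H_min(A|B)_ρ + H_min(A'|B')_{ρ'}`. -/
theorem stmt12 {A A' B B' : Type*}
    [Fintype A] [Fintype A'] [Fintype B] [Fintype B']
    [DecidableEq A] [DecidableEq A'] [DecidableEq B] [DecidableEq B']
    (ρ1 : Matrix (A × B) (A × B) ℂ) (hρ1 : IsDensity ρ1)
    (ρ2 : Matrix (A' × B') (A' × B') ℂ) (hρ2 : IsDensity ρ2) :
    Hmin (prodState ρ1 ρ2) = Hmin ρ1 + Hmin ρ2 := by
  have h := csInf_eq_csInf_add_csInf (feasibleLevels_nonempty hρ1) (feasibleLevels_bddBelow hρ1)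
    (feasibleLevels_nonempty hρ2) (feasibleLevels_bddBelow hρ2)
    (Set.add_subset_iff.2 fun _ hl _ hm => add_mem_feasibleLevels hρ1.1 hl hm)
    (fun _ hu _ hμ => sub_mem_feasibleLevels hρ1 hρ2 hu hμ)
  simp only [Hmin_eq_neg_sInf_feasibleLevels, h]
  ring

end
end

section
/- Let ρ_AB = ρ_A ⊗ ρ_B be a product density operator on H_A ⊗ H_B. Then H_min(A|B)_ρ = −log₂ ‖ρ_A‖_∞, where ‖ρ_A‖_∞ is the largest eigenvalue (operator norm) of ρ_A. -/
open Matrix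
open scoped Kronecker ComplexConjugate ComplexOrder

noncomputable section

/-! The exponents `l` feasible in `H_min(A|B)` are exactly those with `‖ρ_A‖ ≤ 2^l`.
Tracing out `B` from `2^l (1 ⊗ σ) - ρ_A ⊗ ρ_B ≥ 0` gives `2^l • 1 - ρ_A ≥ 0`, which for positive
`ρ_A` means `‖ρ_A‖ ≤ 2^l`; conversely, for `σ = ρ_B` the operator factors as
`(2^l • 1 - ρ_A) ⊗ ρ_B`, a tensor product of positive operators. -/

section PartialTrace

variable {A B : Type*} [Fintype B]

lemma ptraceB_sub (M N : Matrix (A × B) (A × B) ℂ) :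
    ptraceB (M - N) = ptraceB M - ptraceB N := by
  ext i j
  simp [ptraceB, Finset.sum_sub_distrib]

lemma ptraceB_kronecker (X : Matrix A A ℂ) (Y : Matrix B B ℂ) :
    ptraceB (X ⊗ₖ Y) = Y.trace • X := by
  ext i j
  simp [ptraceB, Matrix.trace, Finset.mul_sum, mul_comm]

lemma Matrix.PosSemidef.ptraceB {M : Matrix (A × B) (A × B) ℂ} (hM : M.PosSemidef) :
    (_root_.ptraceB M).PosSemidef := by
  have hblock (b : B) := hM.submatrix fun a : A => (a, b)
  have hsum : _root_.ptraceB M = ∑ b, M.submatrix (fun a : A => (a, b)) (fun a => (a, b)) := by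
    ext i j
    simp [_root_.ptraceB, Matrix.sum_apply]
  rw [hsum]
  exact Matrix.posSemidef_sum _ fun b _ => hblock b

end PartialTrace

lemma Matrix.sub_kronecker {α l m n p : Type*} [NonUnitalNonAssocRing α] (X Y : Matrix l m α)
    (Z : Matrix n p α) :
    (X - Y) ⊗ₖ Z = X ⊗ₖ Z - Y ⊗ₖ Z := by
  ext
  simp [sub_mul]

lemma IsDensity.ne_zero {n : Type*} [Fintype n] {ρ : Matrix n n ℂ} (hρ : IsDensity ρ) :
    ρ ≠ 0 := by
  rintro rfl
  simpa using hρ.2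

section OperatorNorm

open scoped Matrix.Norms.L2Operator

variable {A : Type*} [Fintype A] [DecidableEq A]

open scoped MatrixOrder in
lemma Matrix.PosSemidef.norm_le_iff_posSemidef_smul_one_sub {M : Matrix A A ℂ}
    (hM : M.PosSemidef) {c : ℝ} (hc : 0 ≤ c) :
    ‖M‖ ≤ c ↔ (c • (1 : Matrix A A ℂ) - M).PosSemidef := by
  rw [CStarAlgebra.norm_le_iff_le_algebraMap M hc hM.nonneg, Algebra.algebraMap_eq_smul_one]
  rfl

lemma exists_density_posSemidef_smul_one_kronecker_sub_iff {B : Type*} [Fintype B]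
    [DecidableEq B] {ρA : Matrix A A ℂ} {ρB : Matrix B B ℂ} (hA : IsDensity ρA)
    (hB : IsDensity ρB) {c : ℝ} (hc : 0 ≤ c) :
    (∃ σ : Matrix B B ℂ, IsDensity σ ∧ (c • ((1 : Matrix A A ℂ) ⊗ₖ σ) - ρA ⊗ₖ ρB).PosSemidef) ↔
      ‖ρA‖ ≤ c := by
  rw [hA.1.norm_le_iff_posSemidef_smul_one_sub hc]
  constructor
  · rintro ⟨σ, ⟨-, hσ⟩, hdom⟩
    simpa [ptraceB_sub, ← Matrix.smul_kronecker, ptraceB_kronecker, hσ, hB.2] using hdom.ptraceB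
  · intro hdom
    refine ⟨ρB, hB, ?_⟩
    rw [← Matrix.smul_kronecker, ← Matrix.sub_kronecker]
    exact hdom.kronecker hB.1

lemma IsDensity.norm_pos {ρ : Matrix A A ℂ} (hρ : IsDensity ρ) : 0 < ‖ρ‖ :=
  norm_pos_iff.2 hρ.ne_zero

end OperatorNorm

/-- for a product state `ρ_AB = ρ_A ⊗ ρ_B`,
`H_min(A|B)_ρ = -log₂ ‖ρ_A‖_∞` (operator norm = largest eigenvalue). -/
theorem stmt17 {A B : Type*} [Fintype A] [Fintype B] [DecidableEq A] [DecidableEq B]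
    (ρA : Matrix A A ℂ) (hA : IsDensity ρA)
    (ρB : Matrix B B ℂ) (hB : IsDensity ρB) :
    Hmin (ρA ⊗ₖ ρB) = - Real.logb 2 ‖Matrix.toEuclideanCLM (𝕜 := ℂ) ρA‖ := by
  open scoped Matrix.Norms.L2Operator in
  rw [← Matrix.cstar_norm_def]
  have hfeasible : {l : ℝ | ∃ σ : Matrix B B ℂ, IsDensity σ ∧
      (((2 : ℝ) ^ l : ℝ) • ((1 : Matrix A A ℂ) ⊗ₖ σ) - ρA ⊗ₖ ρB).PosSemidef} =
      Set.Ici (Real.logb 2 ‖ρA‖) := by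
    ext l
    rw [Set.mem_Ici, Real.logb_le_iff_le_rpow one_lt_two hA.norm_pos]
    exact exists_density_posSemidef_smul_one_kronecker_sub_iff hA hB (by positivity)
  rw [Hmin, hfeasible, csInf_Ici]

end
end
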